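/- Explicit subsolution for the stable nonlinearity (Step 3 of Lemma 4.2). Let a > 0, b > 0, ϑ ∈ (0,1], A > 0 and δ > 0, and set c₂ := (2 b^{−1} ϑ^{−1})^{1/ϑ}. Then the function g_δ(x) := c₂ A^{2/ϑ} ((A+δ)² − x²)^{−2/ϑ} satisfies (1/2) g_δ″(x) ≥ −a g_δ(x) + b g_δ(x)^{1+ϑ} for all x with |x| < A + δ. -/
import Mathlib


open MeasureTheory Set Filter Topology

/-- Explicit subsolution for the stable nonlinearity (Step 3 of Lemma 4.2): with
c₂ = (2 b⁻¹ ϑ⁻¹)^{1/ϑ}, the function g_δ(x) = c₂ A^{2/ϑ} ((A+δ)² − x²)^{−2/ϑ}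
satisfies (1/2) g_δ″(x) ≥ −a g_δ(x) + b g_δ(x)^{1+ϑ} for |x| < A + δ. -/
private lemma stable_subsolution_final (a p C V U W A R x : ℝ)
    (ha : 0 < a) (hppos : 0 < p) (hCpos : 0 < C) (hVpos : 0 < V) (hWpos : 0 < W)
    (hAR : A ^ 2 ≤ R ^ 2) (hU : U = R ^ 2 - x ^ 2) :
    -a * (C * W) + p * C * A ^ 2 * V ≤
      1 / 2 * (2 * p * C * (1 * (V * U) + x * (-(2 * x) * (-p - 1) * V))) := by
  subst hU
  have hpCV : 0 < p * C * V := by positivity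
  nlinarith [mul_pos (mul_pos ha hCpos) hWpos,
    mul_le_mul_of_nonneg_left hAR hpCV.le,
    mul_nonneg hpCV.le (sq_nonneg x),
    mul_nonneg (mul_nonneg hppos.le hpCV.le) (sq_nonneg x)]

theorem stable_subsolution
    (a b ϑ A δ : ℝ) (ha : 0 < a) (hb : 0 < b) (hϑ₀ : 0 < ϑ) (hϑ₁ : ϑ ≤ 1)
    (hA : 0 < A) (hδ : 0 < δ)
    (c₂ : ℝ) (hc₂ : c₂ = (2 * b⁻¹ * ϑ⁻¹) ^ (1 / ϑ))
    (gδ : ℝ → ℝ) (hgδ : gδ = fun x : ℝ =>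
      c₂ * A ^ (2 / ϑ) * ((A + δ) ^ 2 - x ^ 2) ^ (-(2 / ϑ))) :
    ∀ x : ℝ, |x| < A + δ →
      -a * gδ x + b * gδ x ^ (1 + ϑ) ≤ (1 / 2) * deriv (deriv gδ) x := by
  subst hgδ
  intro x hx
  set R := A + δ with hR
  have hRpos : 0 < R := by positivity
  set p : ℝ := 2 / ϑ with hp
  have hppos : 0 < p := by positivity
  set C : ℝ := c₂ * A ^ p with hCdef
  have hc₂pos : 0 < c₂ := by rw [hc₂]; positivity
  have hCpos : 0 < C := by rw [hCdef]; positivity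
  have hx2 : x ^ 2 < R ^ 2 := sq_lt_sq' (abs_lt.mp hx).1 (abs_lt.mp hx).2
  have hUx : 0 < R ^ 2 - x ^ 2 := by linarith
  have hpϑ : p * ϑ = 2 := by rw [hp]; field_simp
  -- derivative of gδ at any point where the base is nonzero
  have hd1 : ∀ y : ℝ, R ^ 2 - y ^ 2 ≠ 0 →
      HasDerivAt (fun z : ℝ => C * (R ^ 2 - z ^ 2) ^ (-p))
        (C * (-(2 * y) * (-p) * (R ^ 2 - y ^ 2) ^ (-p - 1))) y := by
    intro y hy
    have h0 : HasDerivAt (fun z : ℝ => R ^ 2 - z ^ 2) (-(2 * y)) y := by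
      simpa using (hasDerivAt_pow 2 y).const_sub (R ^ 2)
    exact (h0.rpow_const (p := -p) (Or.inl hy)).const_mul C
  set g1 : ℝ → ℝ := fun y => C * (-(2 * y) * (-p) * (R ^ 2 - y ^ 2) ^ (-p - 1)) with hg1
  have hopen : IsOpen {y : ℝ | y ^ 2 < R ^ 2} :=
    (isOpen_Iio (a := R ^ 2)).preimage (continuous_pow 2)
  have hev : deriv (fun z : ℝ => C * (R ^ 2 - z ^ 2) ^ (-p)) =ᶠ[𝓝 x] g1 := by
    filter_upwards [hopen.mem_nhds hx2] with y hy
    have hy' : R ^ 2 - y ^ 2 ≠ 0 := by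
      have : y ^ 2 < R ^ 2 := hy
      intro h; linarith [h]
    exact (hd1 y hy').deriv
  have hd2 : deriv (deriv (fun z : ℝ => C * (R ^ 2 - z ^ 2) ^ (-p))) x = deriv g1 x :=
    hev.deriv_eq
  -- derivative of g1 at x
  have hg1' : g1 = fun y => (2 * p * C) * (y * (R ^ 2 - y ^ 2) ^ (-p - 1)) := by
    funext y; rw [hg1]; ring
  have h0x : HasDerivAt (fun z : ℝ => R ^ 2 - z ^ 2) (-(2 * x)) x := by
    simpa using (hasDerivAt_pow 2 x).const_sub (R ^ 2)
  have hinner : HasDerivAt (fun y : ℝ => y * (R ^ 2 - y ^ 2) ^ (-p - 1))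
      (1 * (R ^ 2 - x ^ 2) ^ (-p - 1)
        + x * (-(2 * x) * (-p - 1) * (R ^ 2 - x ^ 2) ^ (-p - 1 - 1))) x :=
    (hasDerivAt_id x).mul (h0x.rpow_const (p := -p - 1) (Or.inl hUx.ne'))
  have hdg1 : deriv g1 x = (2 * p * C) * (1 * (R ^ 2 - x ^ 2) ^ (-p - 1)
        + x * (-(2 * x) * (-p - 1) * (R ^ 2 - x ^ 2) ^ (-p - 1 - 1))) := by
    rw [hg1']
    exact (hinner.const_mul (2 * p * C)).deriv
  rw [show (fun x : ℝ => c₂ * A ^ p * (R ^ 2 - x ^ 2) ^ (-p))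
      = (fun z : ℝ => C * (R ^ 2 - z ^ 2) ^ (-p)) from rfl] at hd2 ⊢
  rw [hd2, hdg1]
  beta_reduce
  -- algebraic part
  set U : ℝ := R ^ 2 - x ^ 2 with hUdef
  set V : ℝ := U ^ (-p - 2) with hVdef
  have hVpos : 0 < V := Real.rpow_pos_of_pos hUx _
  have hWpos : 0 < U ^ (-p) := Real.rpow_pos_of_pos hUx _
  have he1 : U ^ (-p - 1) = V * U := by
    rw [show (-p - 1 : ℝ) = (-p - 2) + 1 by ring, Real.rpow_add_one hUx.ne']
  have he2 : U ^ (-p - 1 - 1) = V := by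
    rw [show (-p - 1 - 1 : ℝ) = -p - 2 by ring]
  -- rewrite the rpow-power term
  have hCϑ : C ^ ϑ = 2 * b⁻¹ * ϑ⁻¹ * A ^ 2 := by
    rw [hCdef, Real.mul_rpow hc₂pos.le (by positivity), hc₂,
      ← Real.rpow_mul (by positivity : (0:ℝ) ≤ 2 * b⁻¹ * ϑ⁻¹), ← Real.rpow_mul hA.le,
      one_div, inv_mul_cancel₀ hϑ₀.ne', Real.rpow_one, hpϑ, Real.rpow_two]
  have hgpow : (C * U ^ (-p)) ^ (1 + ϑ) = C * (2 * b⁻¹ * ϑ⁻¹ * A ^ 2) * V := by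
    rw [Real.mul_rpow hCpos.le (Real.rpow_nonneg hUx.le _),
      ← Real.rpow_mul hUx.le, show (-p * (1 + ϑ)) = -p - 2 by linear_combination -hpϑ,
      Real.rpow_add hCpos 1 ϑ, Real.rpow_one, hCϑ, hVdef]
  rw [hgpow]
  have hbC : b * (C * (2 * b⁻¹ * ϑ⁻¹ * A ^ 2) * V) = p * C * A ^ 2 * V := by
    rw [hp]; field_simp
  rw [he1, he2, hbC]
  have hAR : A ^ 2 ≤ R ^ 2 := by nlinarith
  set W : ℝ := U ^ (-p) with hWdef
  exact stable_subsolution_final a p C V U W A R x ha hppos hCpos hVpos hWpos hAR hUdef
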